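/- arXiv:2407.09655 — 2 statements merged into one kernel-verified Lean document; each statement's English description precedes it below -/
import Mathlib

section
/- Fix x, k ∈ [N] and numbers s_j ∈ [j] for all j < k. For a uniformly random π ∈ S_N, the conditional probability Pr(k ∈ A(π,x) | t_j(π) = s_j for all j < k) equals 1/k if x < k, equals 1 if x = k, and equals 0 if x > k; in particular, the unconditional probability Pr(k ∈ A(π,x)) takes these same values, and the events {k ∈ A(π,x)} for k ∈ [N] are mutually independent under the uniform measure on S_N. -/
open scoped Classical

/-- Embedding of `Fin (k+1)` into `Fin N` (where `k : Fin N`). -/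
def emb {N : ℕ} (k : Fin N) (t : Fin (k.val + 1)) : Fin N :=
  ⟨t.val, lt_of_lt_of_le t.isLt k.isLt⟩

/-- `Phi t = (N t_N)(N−1 t_{N−1})⋯(2 t_2)(1 t_1)`, the strictly monotone factorization map. -/
def Phi {N : ℕ} (t : ∀ k : Fin N, Fin (k.val + 1)) : Equiv.Perm (Fin N) :=
  ((List.finRange N).reverse.map fun k => Equiv.swap k (emb k (t k))).prod

instance {N : ℕ} : Nonempty (∀ k : Fin N, Fin (k.val + 1)) := ⟨fun _ => 0⟩

/-- `tof π` is the tuple `(t_1(π),…,t_N(π))` of the strictly monotone factorization of `π`. -/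
noncomputable def tof {N : ℕ} (π : Equiv.Perm (Fin N)) : ∀ k : Fin N, Fin (k.val + 1) :=
  Function.invFun Phi π

/-- `phead π k` is `π_{<k} = (k−1 t_{k−1})⋯(1 t_1)`. -/
noncomputable def phead {N : ℕ} (π : Equiv.Perm (Fin N)) (k : Fin N) : Equiv.Perm (Fin N) :=
  (((List.finRange N).reverse.filter fun j => decide (j < k)).map
    fun j => Equiv.swap j (emb j (tof π j))).prod

/-- `k` is active for `(π,x)`, i.e. `π_{<k}(x) ∈ {k, t_k(π)}`. -/
noncomputable def isActive {N : ℕ} (π : Equiv.Perm (Fin N)) (x k : Fin N) : Prop :=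
  phead π k x = k ∨ phead π k x = emb k (tof π k)

/-!
Under the bijection `Phi` between tuples `t` with `t k ≤ k` and permutations, the product
`π_{<k}` only depends on `t_j` for `j < k`, and it maps `[0, k)` into itself. Hence for `x < k`
the location `k` is active exactly when `t_k` equals the value `π_{<k}(x) < k`, which is
determined by the earlier coordinates, whereas `k = x` is always active and `k < x` never is.
A system of constraints `t_k = g_k(t_0, …, t_{k-1})` for `k ∈ C` is satisfied by exactly a
`∏_{k ∈ C} (k + 1)`-th part of all `N!` tuples, which gives all the probabilities at once.
-/

open Finset Function

theorem List.filter_gt_append_cons_filter_lt {α : Type*} [LinearOrder α] {l : List α}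
    (hl : l.Pairwise (· > ·)) {k : α} (hk : k ∈ l) :
    l.filter (fun j => decide (k < j)) ++ k :: l.filter (fun j => decide (j < k)) = l := by
  induction l with
  | nil => simp at hk
  | cons a l ih =>
    rw [List.pairwise_cons] at hl
    rcases List.mem_cons.1 hk with rfl | hk
    · have hgt : l.filter (fun j => decide (k < j)) = [] :=
        List.filter_eq_nil_iff.2 fun j hj => by simpa using (hl.1 j hj).le
      have hlt : l.filter (fun j => decide (j < k)) = l :=
        List.filter_eq_self.2 fun j hj => by simpa using hl.1 j hj
      simp [hgt, hlt]
    · have hka : k < a := hl.1 k hk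
      simp [hka, hka.not_gt, ih hl.2 hk]

section Factorization

variable {N : ℕ}

def swapsProd (t : ∀ k : Fin N, Fin (k.val + 1)) (l : List (Fin N)) : Equiv.Perm (Fin N) :=
  (l.map fun j => Equiv.swap j (emb j (t j))).prod

lemma swapsProd_congr {t t' : ∀ k : Fin N, Fin (k.val + 1)} {l : List (Fin N)}
    (h : ∀ j ∈ l, t j = t' j) : swapsProd t l = swapsProd t' l := by
  unfold swapsProd
  rw [List.map_congr_left fun j hj => by rw [h j hj]]

lemma swapsProd_apply_of_forall_lt (t : ∀ k : Fin N, Fin (k.val + 1)) {l : List (Fin N)}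
    {k z : Fin N} (hl : ∀ j ∈ l, j < k) (hz : k ≤ z) : swapsProd t l z = z := by
  suffices swapsProd t l ∈ MulAction.stabilizer (Equiv.Perm (Fin N)) z from
    MulAction.mem_stabilizer_iff.1 this
  refine list_prod_mem fun σ hσ => ?_
  obtain ⟨j, hj, rfl⟩ := List.mem_map.1 hσ
  have hjk : j < k := hl j hj
  have htj : (t j).val < j.val + 1 := (t j).isLt
  refine MulAction.mem_stabilizer_iff.2 (Equiv.swap_apply_of_ne_of_ne ?_ ?_)
  · exact (hjk.trans_le hz).ne'
  · exact fun h => by simp [Fin.ext_iff, emb] at h; omega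

def headProd (t : ∀ k : Fin N, Fin (k.val + 1)) (k : Fin N) : Equiv.Perm (Fin N) :=
  swapsProd t ((List.finRange N).reverse.filter fun j => decide (j < k))

def tailProd (t : ∀ k : Fin N, Fin (k.val + 1)) (k : Fin N) : Equiv.Perm (Fin N) :=
  swapsProd t ((List.finRange N).reverse.filter fun j => decide (k < j))

lemma phead_eq_headProd (π : Equiv.Perm (Fin N)) (k : Fin N) :
    phead π k = headProd (tof π) k := rfl

lemma Phi_eq_tailProd_mul (t : ∀ k : Fin N, Fin (k.val + 1)) (k : Fin N) :
    Phi t = tailProd t k * Equiv.swap k (emb k (t k)) * headProd t k := by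
  have hsplit := List.filter_gt_append_cons_filter_lt
    (List.pairwise_reverse.2 (List.pairwise_lt_finRange N))
    (List.mem_reverse.2 (List.mem_finRange k))
  conv_lhs => rw [Phi, ← hsplit]
  simp [tailProd, headProd, swapsProd, mul_assoc]

lemma headProd_apply_of_le (t : ∀ k : Fin N, Fin (k.val + 1)) {k z : Fin N} (hz : k ≤ z) :
    headProd t k z = z :=
  swapsProd_apply_of_forall_lt t (fun _ hj => by simpa using (List.mem_filter.1 hj).2) hz

lemma headProd_apply_lt (t : ∀ k : Fin N, Fin (k.val + 1)) {k z : Fin N} (hz : z < k) :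
    headProd t k z < k := by
  by_contra! h
  exact hz.not_ge ((headProd t k).injective (headProd_apply_of_le t h) ▸ h)

lemma headProd_congr {t t' : ∀ k : Fin N, Fin (k.val + 1)} {k : Fin N}
    (h : ∀ j < k, t j = t' j) : headProd t k = headProd t' k :=
  swapsProd_congr fun j hj => h j (by simpa using (List.mem_filter.1 hj).2)

lemma tailProd_congr {t t' : ∀ k : Fin N, Fin (k.val + 1)} {k : Fin N}
    (h : ∀ j, k < j → t j = t' j) : tailProd t k = tailProd t' k :=
  swapsProd_congr fun j hj => h j (by simpa using (List.mem_filter.1 hj).2)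

lemma Phi_apply (t : ∀ k : Fin N, Fin (k.val + 1)) (k : Fin N) :
    Phi t k = tailProd t k (emb k (t k)) := by
  rw [Phi_eq_tailProd_mul t k]
  simp [headProd_apply_of_le t le_rfl]

lemma Phi_injective : Injective (Phi (N := N)) := by
  intro t t' h
  funext k
  induction k using WellFoundedGT.induction with
  | _ k ih =>
    have hk := Phi_apply t k
    rw [h, Phi_apply, tailProd_congr ih, (tailProd t' k).injective.eq_iff] at hk
    simpa [emb, Fin.ext_iff] using hk.symm

lemma prod_univ_fin_add_one : ∏ k : Fin N, (k.val + 1) = N.factorial :=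
  (Fin.prod_univ_eq_prod_range (· + 1) N).trans (prod_range_add_one_eq_factorial N)

lemma card_factorizations : Fintype.card (∀ k : Fin N, Fin (k.val + 1)) = N.factorial := by
  simp [Fintype.card_pi, prod_univ_fin_add_one]

lemma Phi_bijective : Bijective (Phi (N := N)) := by
  rw [Fintype.bijective_iff_injective_and_card, card_factorizations, Fintype.card_perm,
    Fintype.card_fin]
  exact ⟨Phi_injective, rfl⟩

lemma tof_Phi (t : ∀ k : Fin N, Fin (k.val + 1)) : tof (Phi t) = t :=
  leftInverse_invFun Phi_injective t

lemma Phi_tof (π : Equiv.Perm (Fin N)) : Phi (tof π) = π :=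
  rightInverse_invFun Phi_bijective.surjective π

lemma card_filter_tof (Q : (∀ k : Fin N, Fin (k.val + 1)) → Prop) [DecidablePred Q]
    [DecidablePred fun π : Equiv.Perm (Fin N) => Q (tof π)] :
    #{π | Q (tof π)} = #{t | Q t} :=
  card_nbij' tof Phi (fun π hπ => by simpa using hπ) (fun t ht => by simpa [tof_Phi] using ht)
    (fun π _ => Phi_tof π) (fun t _ => tof_Phi t)

end Factorization

section Triangular

variable {ι : Type*} [DecidableEq ι] [Fintype ι] {α : ι → Type*} [∀ i, Fintype (α i)]

lemma card_filter_eq_and_mul_card (m : ι) (P : (∀ i, α i) → Prop) [DecidablePred P]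
    (h : (∀ i, α i) → α m) (hP : ∀ t a, P (update t m a) ↔ P t)
    (hh : ∀ t a, h (update t m a) = h t) :
    #{t | t m = h t ∧ P t} * Fintype.card (α m) = #{t | P t} := by
  rw [← card_univ, ← card_product]
  refine card_nbij' (fun p => update p.1 m p.2) (fun t => (update t m (h t), t m))
    (fun p hp => ?_) (fun t ht => ?_) (fun p hp => ?_) (fun t _ => ?_)
  · simp only [mem_coe, mem_product, mem_filter, mem_univ, true_and, and_true] at hp
    simpa [hP] using hp.2
  · simpa [hP, hh] using ht
  · simp only [mem_coe, mem_product, mem_filter, mem_univ, true_and, and_true] at hp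
    simp [hh, ← hp.1]
  · simp

theorem card_filter_triangular_mul_prod [LinearOrder ι] (C : Finset ι)
    (g : (∀ i, α i) → ∀ i, α i)
    (hg : ∀ k t t', (∀ j < k, t j = t' j) → g t k = g t' k) :
    #{t | ∀ k ∈ C, t k = g t k} * ∏ k ∈ C, Fintype.card (α k)
      = ∏ i, Fintype.card (α i) := by
  induction C using Finset.induction_on_max with
  | empty => simp
  | insert m C hC ih =>
    have hupd : ∀ t a k, k ≤ m → g (update t m a) k = g t k := fun t a k hk =>
      hg k _ _ fun j hj => update_of_ne (hj.trans_le hk).ne _ _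
    have hstep := card_filter_eq_and_mul_card m (fun t => ∀ k ∈ C, t k = g t k) (g · m)
      (fun t a => forall₂_congr fun k hk => by
        rw [update_of_ne (hC k hk).ne, hupd t a k (hC k hk).le])
      (fun t a => hupd t a m le_rfl)
    have hins : #{t | ∀ k ∈ insert m C, t k = g t k}
        = #{t | t m = g t m ∧ ∀ k ∈ C, t k = g t k} := by
      simp only [forall_mem_insert]
    rw [prod_insert fun h => (hC m h).false, ← mul_assoc, hins, hstep, ih]

end Triangular

section Activity

variable {N : ℕ}

-- The clamp only serves to land in `Fin (k + 1)`: for `x < k` the value `π_{<k}(x)` is `< k`.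
def activeIndex (x : Fin N) (t : ∀ k : Fin N, Fin (k.val + 1)) (k : Fin N) : Fin (k.val + 1) :=
  Fin.clamp (headProd t k x) k

lemma activeIndex_congr (x : Fin N) {t t' : ∀ k : Fin N, Fin (k.val + 1)} {k : Fin N}
    (h : ∀ j < k, t j = t' j) : activeIndex x t k = activeIndex x t' k := by
  rw [activeIndex, activeIndex, headProd_congr h]

lemma isActive_self (π : Equiv.Perm (Fin N)) (x : Fin N) : isActive π x x :=
  Or.inl (headProd_apply_of_le (tof π) le_rfl)

lemma not_isActive_of_lt (π : Equiv.Perm (Fin N)) {x k : Fin N} (h : k < x) :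
    ¬ isActive π x k := by
  have htk : (tof π k).val < k.val + 1 := (tof π k).isLt
  rw [isActive, phead_eq_headProd, headProd_apply_of_le (tof π) h.le]
  rintro (rfl | hx)
  · exact h.false
  · simp [Fin.ext_iff, emb] at hx
    omega

lemma isActive_iff_of_lt (π : Equiv.Perm (Fin N)) {x k : Fin N} (h : x < k) :
    isActive π x k ↔ tof π k = activeIndex x (tof π) k := by
  have hlt := headProd_apply_lt (tof π) h
  rw [isActive, phead_eq_headProd, or_iff_right hlt.ne, Fin.ext_iff, Fin.ext_iff, activeIndex,
    Fin.coe_clamp, min_eq_left (Fin.lt_def.1 hlt).le]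
  exact eq_comm

lemma card_forall_isActive_mul_prod (x : Fin N) {S : Finset (Fin N)} (hS : ∀ k ∈ S, x ≤ k) :
    #{π | ∀ k ∈ S, isActive π x k} * ∏ k ∈ S with x < k, (k.val + 1) = N.factorial := by
  have hfilter : #{π | ∀ k ∈ S, isActive π x k}
      = #{π | ∀ k ∈ {k ∈ S | x < k}, tof π k = activeIndex x (tof π) k} := by
    congr 1
    refine filter_congr fun π _ => ⟨fun h k hk => ?_, fun h k hk => ?_⟩
    · rw [mem_filter] at hk
      exact (isActive_iff_of_lt π hk.2).1 (h k hk.1)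
    · rcases (hS k hk).eq_or_lt with rfl | hxk
      · exact isActive_self π x
      · exact (isActive_iff_of_lt π hxk).2 (h k (mem_filter.2 ⟨hk, hxk⟩))
  have key := card_filter_triangular_mul_prod {k ∈ S | x < k} (activeIndex x)
    fun k t t' h => activeIndex_congr x h
  simp only [Fintype.card_fin, prod_univ_fin_add_one] at key
  rw [hfilter, card_filter_tof (fun t => ∀ k ∈ {k ∈ S | x < k}, t k = activeIndex x t k)]
  -- the two filters differ only in their (non-defeq) decidability instances
  convert key using 4

lemma card_tof_eq_on_Iio_mul_prod (k : Fin N) (s : ∀ j : Fin N, Fin (j.val + 1)) :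
    #{π | ∀ j < k, tof π j = s j} * ∏ j ∈ Iio k, (j.val + 1) = N.factorial := by
  rw [card_filter_tof (fun t => ∀ j < k, t j = s j), ← prod_univ_fin_add_one]
  simpa only [Fintype.card_fin, mem_Iio] using
    card_filter_triangular_mul_prod (Iio k) (fun _ => s) fun _ _ _ _ => rfl

lemma card_isActive_and_tof_eq_on_Iio_mul_prod {x k : Fin N} (hxk : x < k)
    (s : ∀ j : Fin N, Fin (j.val + 1)) :
    #{π | isActive π x k ∧ ∀ j < k, tof π j = s j}
      * ((k.val + 1) * ∏ j ∈ Iio k, (j.val + 1)) = N.factorial := by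
  have hfilter : #{π | isActive π x k ∧ ∀ j < k, tof π j = s j}
      = #{π | ∀ j ∈ insert k (Iio k), tof π j = update s k (activeIndex x (tof π) k) j} := by
    congr 1
    refine filter_congr fun π _ => ?_
    rw [forall_mem_insert, update_self, isActive_iff_of_lt π hxk]
    simp only [mem_Iio]
    refine and_congr_right' (forall₂_congr fun j hj => ?_)
    rw [update_of_ne hj.ne]
  have hg : ∀ j t t', (∀ i < j, t i = t' i) →
      update s k (activeIndex x t k) j = update s k (activeIndex x t' k) j := by
    intro j t t' h
    rcases eq_or_ne j k with rfl | hjk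
    · simp [activeIndex_congr x h]
    · simp [update_of_ne hjk]
  have key := card_filter_triangular_mul_prod (insert k (Iio k))
    (fun t => update s k (activeIndex x t k)) hg
  simp only [Fintype.card_fin, prod_univ_fin_add_one, prod_insert notMem_Iio_self] at key
  rw [hfilter,
    card_filter_tof (fun t => ∀ j ∈ insert k (Iio k), t j = update s k (activeIndex x t k) j)]
  convert key using 4

end Activity

section Probability

variable {N : ℕ}

noncomputable def activeProb (x k : Fin N) : ℝ :=
  if x < k then 1 / ((k.val : ℝ) + 1) else if x = k then 1 else 0

lemma prob_forall_isActive (x : Fin N) (S : Finset (Fin N)) :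
    (#{π | ∀ k ∈ S, isActive π x k} : ℝ) / N.factorial = ∏ k ∈ S, activeProb x k := by
  by_cases hS : ∀ k ∈ S, x ≤ k
  · have hprod :
        ∏ k ∈ S, activeProb x k = ∏ k ∈ S with x < k, 1 / ((k.val : ℝ) + 1) := by
      rw [prod_filter]
      refine prod_congr rfl fun k hk => ?_
      rcases (hS k hk).eq_or_lt with rfl | hxk
      · simp [activeProb]
      · simp [activeProb, hxk]
    rw [hprod, div_eq_iff (by positivity), ← card_forall_isActive_mul_prod x hS]
    push_cast
    rw [mul_left_comm, ← prod_mul_distrib, prod_eq_one fun k _ => by field_simp, mul_one]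
  · obtain ⟨k, hkS, hkx⟩ : ∃ k ∈ S, k < x := by simpa using hS
    have hempty : #{π | ∀ k ∈ S, isActive π x k} = 0 :=
      card_eq_zero.2 (filter_eq_empty_iff.2 fun π _ h => not_isActive_of_lt π hkx (h k hkS))
    rw [hempty, Nat.cast_zero, zero_div, eq_comm]
    exact prod_eq_zero hkS (by simp [activeProb, hkx.not_gt, hkx.ne'])

lemma prob_isActive (x k : Fin N) :
    (#{π | isActive π x k} : ℝ) / N.factorial = activeProb x k := by
  simpa using prob_forall_isActive x {k}

lemma condProb_isActive (x k : Fin N) (s : ∀ j : Fin N, Fin (j.val + 1)) :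
    (#{π | isActive π x k ∧ ∀ j < k, tof π j = s j} : ℝ)
      / #{π | ∀ j < k, tof π j = s j} = activeProb x k := by
  have hcond := card_tof_eq_on_Iio_mul_prod k s
  have hcond_ne : (#{π | ∀ j < k, tof π j = s j} : ℝ) ≠ 0 :=
    Nat.cast_ne_zero.2 (left_ne_zero_of_mul (hcond ▸ N.factorial_ne_zero))
  rcases lt_trichotomy x k with hxk | rfl | hkx
  · have hprod_pos : 0 < ∏ j ∈ Iio k, (j.val + 1) := prod_pos fun j _ => j.val.succ_pos
    have hratio : #{π | isActive π x k ∧ ∀ j < k, tof π j = s j} * (k.val + 1)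
        = #{π | ∀ j < k, tof π j = s j} := by
      refine Nat.eq_of_mul_eq_mul_right hprod_pos ?_
      rw [mul_assoc, card_isActive_and_tof_eq_on_Iio_mul_prod hxk s, hcond]
    rw [activeProb, if_pos hxk, div_eq_iff hcond_ne, ← hratio]
    push_cast
    field_simp
  · simp [isActive_self, activeProb, div_self hcond_ne]
  · simp [not_isActive_of_lt _ hkx, activeProb, hkx.not_gt, hkx.ne']

end Probability

theorem stmt6_general {N : ℕ} (x k : Fin N) (s : ∀ j : Fin N, Fin (j.val + 1)) :
    (((Finset.univ.filter fun π : Equiv.Perm (Fin N) =>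
          isActive π x k ∧ ∀ j, j < k → tof π j = s j).card : ℝ) /
        ((Finset.univ.filter fun π : Equiv.Perm (Fin N) => ∀ j, j < k → tof π j = s j).card : ℝ)
        = if x < k then 1 / ((k.val : ℝ) + 1) else if x = k then 1 else 0)
    ∧ (((Finset.univ.filter fun π : Equiv.Perm (Fin N) => isActive π x k).card : ℝ) /
          (N.factorial : ℝ)
        = if x < k then 1 / ((k.val : ℝ) + 1) else if x = k then 1 else 0)
    ∧ ∀ S : Finset (Fin N),
        ((Finset.univ.filter fun π : Equiv.Perm (Fin N) => ∀ k' ∈ S, isActive π x k').card : ℝ) /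
            (N.factorial : ℝ)
          = ∏ k' ∈ S,
              ((Finset.univ.filter fun π : Equiv.Perm (Fin N) => isActive π x k').card : ℝ) /
                (N.factorial : ℝ) := by
  refine ⟨condProb_isActive x k s, prob_isActive x k, fun S => ?_⟩
  simpa only [prob_isActive] using prob_forall_isActive x S

/-- Fix `x, k ∈ [N]` and numbers `s_j ∈ [j]` for `j < k`.  For uniformly
random `π ∈ S_N`, the conditional probability `Pr(k ∈ A(π,x) | t_j(π) = s_j ∀ j < k)` equals
`1/k` if `x < k`, `1` if `x = k`, `0` if `x > k`; the unconditional probability takes the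
same values; and the events `{k ∈ A(π,x)}`, `k ∈ [N]`, are mutually independent. -/
theorem stmt6 {N : ℕ} (hN : 1 ≤ N) (x k : Fin N) (s : ∀ j : Fin N, Fin (j.val + 1)) :
    (((Finset.univ.filter fun π : Equiv.Perm (Fin N) =>
          isActive π x k ∧ ∀ j, j < k → tof π j = s j).card : ℝ) /
        ((Finset.univ.filter fun π : Equiv.Perm (Fin N) => ∀ j, j < k → tof π j = s j).card : ℝ)
        = if x < k then 1 / ((k.val : ℝ) + 1) else if x = k then 1 else 0)
    ∧ (((Finset.univ.filter fun π : Equiv.Perm (Fin N) => isActive π x k).card : ℝ) /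
          (N.factorial : ℝ)
        = if x < k then 1 / ((k.val : ℝ) + 1) else if x = k then 1 else 0)
    ∧ ∀ S : Finset (Fin N),
        ((Finset.univ.filter fun π : Equiv.Perm (Fin N) => ∀ k' ∈ S, isActive π x k').card : ℝ) /
            (N.factorial : ℝ)
          = ∏ k' ∈ S,
              ((Finset.univ.filter fun π : Equiv.Perm (Fin N) => isActive π x k').card : ℝ) /
                (N.factorial : ℝ) :=
  stmt6_general x k s
end

section
/- For every y ∈ [N], the expected number of inverse-active locations for a uniformly random permutation satisfies (1/N!) ∑_{π ∈ S_N} |A^inv(π,y)| ≤ 1 + (2y − 2)/N; in particular this expectation is strictly less than 3. -/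
/-- `ptail π k` is `π_{>k} = (N t_N)⋯(k+1 t_{k+1})`. -/
noncomputable def ptail {N : ℕ} (π : Equiv.Perm (Fin N)) (k : Fin N) : Equiv.Perm (Fin N) :=
  (((List.finRange N).reverse.filter fun j => decide (k < j)).map
    fun j => Equiv.swap j (emb j (tof π j))).prod

/-- `A^inv(π,y)`: the set of inverse-active locations, i.e. `k` with
`(π_{>k})⁻¹(y) ∈ {k, t_k(π)}`. -/
noncomputable def invActiveSet {N : ℕ} (π : Equiv.Perm (Fin N)) (y : Fin N) : Finset (Fin N) :=
  Finset.univ.filter fun k => (ptail π k)⁻¹ y = k ∨ (ptail π k)⁻¹ y = emb k (tof π k)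

/-!
Through the strictly monotone factorization, a uniform `π` corresponds to a uniform tuple
`t` of independent `t_k`, each uniform in `{0, …, k}` (levels and values counted from `0`).
Track the value `v_k = (π_{>k})⁻¹ y`: it enters at the top as `y`, and passing level `k` turns
it into `(k t_k) v_k`; location `k` is active iff `v_k ∈ {k, t_k}`. Let `e_K(v)` be the expected
number of active locations below `K` when the value entering level `K` is `v`. All lower swaps fix
a value `v ≥ K`, so `e_K(v) = 0`, and `K e_K(v) ≤ K + 2v` for `v < K` by induction on `K`:
if `v < K - 1`, level `K - 1` is active only when `t_{K-1} = v` (probability `1/K`), and then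
the value becomes `K - 1`, below which nothing is active; if `v = K - 1`, the level is active
and the value becomes uniform in `{0, …, K - 1}`, over which the inductive bound is summed.
-/

open Finset Equiv Nat

section Fiber

variable {ι M : Type*} [Fintype ι] [DecidableEq ι] {β : ι → Type*} [∀ i, Fintype (β i)]
  [∀ i, DecidableEq (β i)] [AddCommMonoid M]

lemma Fintype.sum_eq_card_smul_sum_filter_apply_eq (i : ι) {G : (∀ j, β j) → M}
    (hG : ∀ t c, G (Function.update t i c) = G t) (c : β i) :
    ∑ t, G t = Fintype.card (β i) • ∑ t with t i = c, G t := by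
  rw [← Finset.sum_fiberwise univ (fun t => t i) G, ← Finset.card_univ, ← Finset.sum_const]
  refine Finset.sum_congr rfl fun c' _ => ?_
  refine Finset.sum_nbij' (Function.update · i c) (Function.update · i c') ?_ ?_ ?_ ?_ ?_ <;>
    simp_all

lemma Fintype.card_smul_sum_comp_apply (i : ι) {F : β i → (∀ j, β j) → M}
    (hF : ∀ c t c', F c (Function.update t i c') = F c t) :
    Fintype.card (β i) • ∑ t, F (t i) t = ∑ c, ∑ t, F c t := by
  rw [← Finset.sum_fiberwise univ (fun t => t i), Finset.smul_sum]
  refine Finset.sum_congr rfl fun c _ => ?_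
  rw [Fintype.sum_eq_card_smul_sum_filter_apply_eq i (hF c) c]
  congr 1
  exact Finset.sum_congr rfl fun t ht => by rw [(Finset.mem_filter.mp ht).2]

end Fiber

lemma sum_range_add_two_mul_le (K : ℕ) : ∑ i ∈ range K, (K + 2 * i) ≤ K * (2 * K) := by
  have hgauss := Finset.sum_range_id_mul_two K
  have : K * (K - 1) ≤ K * K := Nat.mul_le_mul_left _ (Nat.sub_le _ _)
  rw [sum_add_distrib, sum_const, card_range, smul_eq_mul, ← mul_sum]
  nlinarith

lemma List.filter_lt_range {k N : ℕ} (hk : k < N) :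
    (List.range N).filter (fun j => decide (k < j)) = List.range' (k + 1) (N - (k + 1)) := by
  obtain ⟨d, rfl⟩ : ∃ d, N = k + 1 + d := ⟨N - (k + 1), by omega⟩
  rw [List.range_eq_range', ← List.range'_append, List.filter_append,
    List.filter_eq_nil_iff.mpr, List.filter_eq_self.mpr, Nat.add_sub_cancel_left]
  · simp
  all_goals
    intro j hj
    have := List.mem_range'_1.mp hj
    simp only [decide_eq_true_eq]
    omega

lemma emb_injective {N : ℕ} (k : Fin N) : Function.Injective (emb k) :=
  fun _ _ h => Fin.ext (congrArg Fin.val h :)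

abbrev Factors (N : ℕ) := ∀ k : Fin N, Fin (k.val + 1)

namespace Factors

variable {N : ℕ} (t : Factors N)

/-- `swapAt t j = (j t_j)` and `valAt t j = t_j`; beyond the last level they are `1` and `j`,
so that no level `j ≥ N` can be active. -/
def swapAt (j : ℕ) : Perm (Fin N) :=
  if h : j < N then swap ⟨j, h⟩ (emb ⟨j, h⟩ (t ⟨j, h⟩)) else 1

def valAt (j : ℕ) : ℕ :=
  if h : j < N then (t ⟨j, h⟩).val else j

/-- `(m t_m)(m+1 t_{m+1})⋯(K-1 t_{K-1})`, so that `(π_{>k})⁻¹ = swapProd t (k + 1) N`. -/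
def swapProd (m K : ℕ) : Perm (Fin N) :=
  ((List.range' m (K - m)).map t.swapAt).prod

lemma swapAt_val (k : Fin N) : t.swapAt k.val = swap k (emb k (t k)) :=
  dif_pos k.isLt

lemma valAt_val (k : Fin N) : t.valAt k.val = (t k).val :=
  dif_pos k.isLt

lemma valAt_le (j : ℕ) : t.valAt j ≤ j := by
  unfold valAt
  split_ifs with h
  · exact Nat.lt_succ_iff.mp (t ⟨j, h⟩).isLt
  · rfl

lemma swapAt_inv (j : ℕ) : (t.swapAt j)⁻¹ = t.swapAt j := by
  unfold swapAt
  split_ifs <;> simp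

lemma swapAt_apply_of_lt {j : ℕ} {x : Fin N} (hj : j < x.val) : t.swapAt j x = x := by
  unfold swapAt
  split_ifs with h
  · have : (emb ⟨j, h⟩ (t ⟨j, h⟩)).val ≤ j := Nat.lt_succ_iff.mp (t ⟨j, h⟩).isLt
    exact swap_apply_of_ne_of_ne (Fin.ne_of_val_ne (by simp; omega))
      (Fin.ne_of_val_ne (by omega))
  · rfl

variable {t}

lemma swapAt_update {i : Fin N} {c : Fin (i.val + 1)} {j : ℕ} (hj : j ≠ i.val) :
    Factors.swapAt (Function.update t i c) j = t.swapAt j := by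
  unfold swapAt
  split_ifs with h
  · rw [Function.update_of_ne (Fin.ne_of_val_ne (i := ⟨j, h⟩) hj)]
  · rfl

lemma valAt_update {i : Fin N} {c : Fin (i.val + 1)} {j : ℕ} (hj : j ≠ i.val) :
    Factors.valAt (Function.update t i c) j = t.valAt j := by
  unfold valAt
  split_ifs with h
  · rw [Function.update_of_ne (Fin.ne_of_val_ne (i := ⟨j, h⟩) hj)]
  · rfl

variable (t)

lemma swapProd_of_le {m K : ℕ} (h : K ≤ m) : t.swapProd m K = 1 := by
  simp [swapProd, Nat.sub_eq_zero_of_le h]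

lemma swapProd_split {m c K : ℕ} (hmc : m ≤ c) (hcK : c ≤ K) :
    t.swapProd m K = t.swapProd m c * t.swapProd c K := by
  have : K - m = (c - m) + (K - c) := by omega
  rw [swapProd, this, ← List.range'_append, List.map_append, List.prod_append, one_mul,
    Nat.add_sub_cancel' hmc]
  rfl

lemma swapProd_succ {m K : ℕ} (h : m ≤ K) :
    t.swapProd m (K + 1) = t.swapProd m K * t.swapAt K := by
  rw [swapProd_split t h K.le_succ]
  simp [swapProd]

lemma swapProd_apply_of_le {m K : ℕ} {x : Fin N} (hx : K ≤ x.val) : t.swapProd m K x = x := by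
  have hmem : t.swapProd m K ∈ MulAction.stabilizer (Perm (Fin N)) x :=
    (MulAction.stabilizer _ x).toSubmonoid.list_prod_mem fun g hg => by
      obtain ⟨j, hj, rfl⟩ := List.mem_map.mp hg
      have := List.mem_range'_1.mp hj
      exact t.swapAt_apply_of_lt (by omega)
  exact hmem

lemma swapProd_congr {s : Factors N} {m K : ℕ}
    (h : ∀ j, m ≤ j → j < K → t.swapAt j = s.swapAt j) :
    t.swapProd m K = s.swapProd m K := by
  unfold swapProd
  congr 1
  refine List.map_congr_left fun j hj => ?_
  have := List.mem_range'_1.mp hj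
  exact h j this.1 (by omega)

lemma swapProd_inv_apply {m : ℕ} {k : Fin N} (hm : m ≤ k.val) :
    (t.swapProd m (k.val + 1))⁻¹ k = emb k (t k) := by
  have hfix : (t.swapProd m k.val)⁻¹ k = k :=
    Perm.inv_eq_iff_eq.mpr (t.swapProd_apply_of_le le_rfl).symm
  rw [swapProd_succ t hm, mul_inv_rev, Perm.mul_apply, hfix, swapAt_inv, swapAt_val,
    swap_apply_left]

lemma inv_prod_reverse_map_swapAt (l : List ℕ) :
    ((l.map t.swapAt).reverse.prod)⁻¹ = (l.map t.swapAt).prod := by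
  rw [List.prod_inv_reverse, List.map_reverse, List.reverse_reverse, List.map_map]
  exact congrArg List.prod (List.map_congr_left fun j _ => t.swapAt_inv j)

lemma map_finRange_swap (l : List (Fin N)) :
    l.map (fun k => swap k (emb k (t k))) = (l.map Fin.val).map t.swapAt := by
  rw [List.map_map]
  exact List.map_congr_left fun k _ => (t.swapAt_val k).symm

theorem eq_of_swapProd_eq {t s : Factors N} (h : t.swapProd 0 N = s.swapProd 0 N) (k : Fin N) :
    t k = s k := by
  have htail : t.swapProd (k + 1) N = s.swapProd (k + 1) N :=
    swapProd_congr t fun j hj hjN => by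
      rw [swapAt_val t ⟨j, hjN⟩, swapAt_val s ⟨j, hjN⟩, eq_of_swapProd_eq h ⟨j, hjN⟩]
  have hhead : t.swapProd 0 (k + 1) = s.swapProd 0 (k + 1) := by
    rw [swapProd_split t (k.val + 1).zero_le k.isLt, swapProd_split s (k.val + 1).zero_le k.isLt,
      htail] at h
    exact mul_right_cancel h
  have hemb := congrArg (fun σ => σ⁻¹ k) hhead
  simp only [swapProd_inv_apply _ k.val.zero_le] at hemb
  exact emb_injective k hemb
termination_by N - k.val

lemma Phi_eq_inv_swapProd : Phi t = (t.swapProd 0 N)⁻¹ := by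
  rw [Phi, swapProd, ← inv_prod_reverse_map_swapAt, inv_inv, map_finRange_swap,
    List.map_reverse, List.map_reverse, List.map_coe_finRange_eq_range, List.range_eq_range',
    Nat.sub_zero]

theorem Phi_injective : Function.Injective (Phi (N := N)) := fun t s h =>
  funext <| eq_of_swapProd_eq
    (inv_injective (by rwa [Phi_eq_inv_swapProd, Phi_eq_inv_swapProd] at h))

lemma card_eq_factorial : Fintype.card (Factors N) = N ! := by
  rw [Fintype.card_pi]
  simp only [Fintype.card_fin]
  rw [Fin.prod_univ_eq_prod_range (· + 1), Finset.prod_range_add_one_eq_factorial]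

theorem Phi_bijective : Function.Bijective (Phi (N := N)) :=
  (Fintype.bijective_iff_injective_and_card _).mpr
    ⟨Phi_injective, by rw [card_eq_factorial, Fintype.card_perm, Fintype.card_fin]⟩

lemma tof_Phi : tof (Phi t) = t :=
  Function.leftInverse_invFun Phi_injective t

lemma ptail_Phi_inv (k : Fin N) : (ptail (Phi t) k)⁻¹ = t.swapProd (k + 1) N := by
  have hval : ((List.finRange N).filter fun j => decide (k < j)).map Fin.val
      = (List.range N).filter fun j => decide (k.val < j) := by
    rw [← List.map_coe_finRange_eq_range, List.filter_map]
    rfl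
  rw [ptail, tof_Phi, List.filter_reverse, map_finRange_swap, List.map_reverse, List.map_reverse,
    inv_prod_reverse_map_swapAt, hval, List.filter_lt_range k.isLt, swapProd]

/-- The number of active locations `j < K` when the value entering level `K` is `v`. -/
def activeCount (K : ℕ) (v : Fin N) : ℕ :=
  ∑ j ∈ range K,
    if (t.swapProd (j + 1) K v).val = j ∨ (t.swapProd (j + 1) K v).val = t.valAt j then 1 else 0

lemma card_invActiveSet_Phi (y : Fin N) :
    (invActiveSet (Phi t) y).card = t.activeCount N y := by
  rw [invActiveSet, Finset.card_filter, activeCount, ← Fin.sum_univ_eq_sum_range]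
  refine Finset.sum_congr rfl fun k _ => ?_
  rw [ptail_Phi_inv, tof_Phi, t.valAt_val]
  exact if_congr (or_congr Fin.ext_iff Fin.ext_iff) rfl rfl

lemma activeCount_eq_zero_of_le {K : ℕ} {v : Fin N} (hv : K ≤ v.val) :
    t.activeCount K v = 0 := by
  refine Finset.sum_eq_zero fun j hj => if_neg ?_
  have := mem_range.mp hj
  have := t.valAt_le j
  rw [t.swapProd_apply_of_le hv]
  omega

lemma activeCount_succ (K : ℕ) (v : Fin N) :
    t.activeCount (K + 1) v
      = t.activeCount K (t.swapAt K v) + if v.val = K ∨ v.val = t.valAt K then 1 else 0 := by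
  rw [activeCount, sum_range_succ, swapProd_of_le t le_rfl, Perm.one_apply, activeCount]
  congr 1
  refine sum_congr rfl fun j hj => ?_
  rw [swapProd_succ t (mem_range.mp hj), Perm.mul_apply]

variable {t}

lemma activeCount_update {i : Fin N} (c : Fin (i.val + 1)) {K : ℕ} (hK : K ≤ i.val)
    (v : Fin N) : Factors.activeCount (Function.update t i c) K v = t.activeCount K v := by
  refine sum_congr rfl fun j hj => ?_
  have hj := mem_range.mp hj
  rw [swapProd_congr _ (s := t) fun l _ hl => swapAt_update (by omega), valAt_update (by omega)]

end Factors

def totalActive (N K : ℕ) (v : Fin N) : ℕ :=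
  ∑ t : Factors N, t.activeCount K v

section totalActive

variable {N : ℕ}

lemma totalActive_eq_zero_of_le {K : ℕ} {v : Fin N} (hv : K ≤ v.val) : totalActive N K v = 0 :=
  sum_eq_zero fun t _ => t.activeCount_eq_zero_of_le hv

lemma succ_mul_totalActive_succ (k : Fin N) (v : Fin N) :
    (k.val + 1) * totalActive N (k.val + 1) v = ∑ c : Fin (k.val + 1),
      (totalActive N k.val (swap k (emb k c) v) + if v = k ∨ v = emb k c then N ! else 0) := by
  have hstep (t : Factors N) : t.activeCount (k.val + 1) v
      = t.activeCount k.val (swap k (emb k (t k)) v)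
        + if v = k ∨ v = emb k (t k) then 1 else 0 := by
    rw [t.activeCount_succ, t.swapAt_val, t.valAt_val]
    exact congrArg _
      (if_congr (or_congr Fin.ext_iff (Fin.ext_iff (b := emb k (t k)))).symm rfl rfl)
  have key := Fintype.card_smul_sum_comp_apply (M := ℕ) k
    (F := fun c (t : Factors N) => t.activeCount k.val (swap k (emb k c) v)
      + if v = k ∨ v = emb k c then 1 else 0)
    (fun c t c' => by rw [Factors.activeCount_update c' le_rfl])
  rw [Fintype.card_fin, smul_eq_mul] at key
  rw [totalActive, sum_congr rfl fun t _ => hstep t, key]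
  refine sum_congr rfl fun c _ => ?_
  rw [sum_add_distrib, totalActive]
  split_ifs <;> simp only [sum_const, Finset.card_univ, Factors.card_eq_factorial, smul_eq_mul,
    mul_one, mul_zero]

lemma succ_mul_totalActive_succ_self (k : Fin N) :
    (k.val + 1) * totalActive N (k.val + 1) k
      = ∑ c : Fin (k.val + 1), totalActive N k.val (emb k c) + (k.val + 1) * N ! := by
  simp [succ_mul_totalActive_succ k, sum_add_distrib]

lemma succ_mul_totalActive_succ_of_lt {k v : Fin N} (hv : v < k) :
    (k.val + 1) * totalActive N (k.val + 1) v = k.val * totalActive N k.val v + N ! := by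
  let c₀ : Fin (k.val + 1) := ⟨v.val, Nat.lt_succ_of_lt hv⟩
  have hc₀ : emb k c₀ = v := rfl
  rw [succ_mul_totalActive_succ k, ← add_sum_erase _ _ (mem_univ c₀),
    sum_congr rfl (g := fun _ => totalActive N k.val v) fun c hc => ?_]
  · rw [sum_const, card_erase_of_mem (mem_univ _), Finset.card_univ, Fintype.card_fin,
      add_tsub_cancel_right, smul_eq_mul, hc₀, swap_apply_right, totalActive_eq_zero_of_le le_rfl,
      if_pos (Or.inr rfl), zero_add, add_comm]
  · have hcv : emb k c ≠ v := fun h => ne_of_mem_erase hc (emb_injective k (h.trans hc₀.symm))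
    rw [swap_apply_of_ne_of_ne hv.ne hcv.symm,
      if_neg (by rintro (h | h); exacts [hv.ne h, hcv h.symm]), add_zero]

lemma sum_totalActive_emb_le (k : Fin N)
    (hbound : ∀ v : Fin N, v < k →
      k.val * totalActive N k.val v ≤ (k.val + 2 * v.val) * N !) :
    ∑ c : Fin (k.val + 1), totalActive N k.val (emb k c) ≤ 2 * k.val * N ! := by
  rcases Nat.eq_zero_or_pos k.val with hk | hk
  · simp [totalActive_eq_zero_of_le, hk]
  refine le_of_mul_le_mul_left ?_ hk
  rw [Fin.sum_univ_castSucc,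
    totalActive_eq_zero_of_le (K := k.val) (v := emb k (Fin.last _)) le_rfl, add_zero, mul_sum]
  calc ∑ c : Fin k.val, k.val * totalActive N k.val (emb k c.castSucc)
      ≤ ∑ c : Fin k.val, (k.val + 2 * c.val) * N ! := sum_le_sum fun c _ => hbound _ c.isLt
    _ = (∑ i ∈ range k.val, (k.val + 2 * i)) * N ! := by
      rw [Fin.sum_univ_eq_sum_range (fun i => (k.val + 2 * i) * N !), sum_mul]
    _ ≤ k.val * (2 * k.val) * N ! := Nat.mul_le_mul_right _ (sum_range_add_two_mul_le k.val)
    _ = k.val * (2 * k.val * N !) := by ring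

lemma mul_totalActive_le {K : ℕ} (hK : K ≤ N) {v : Fin N} (hv : v.val < K) :
    K * totalActive N K v ≤ (K + 2 * v.val) * N ! := by
  induction K generalizing v with
  | zero => exact absurd hv (Nat.not_lt_zero _)
  | succ K ih =>
    have hK' : K < N := hK
    let k : Fin N := ⟨K, hK'⟩
    rcases Nat.lt_succ_iff_lt_or_eq.mp hv with hv | hv
    · calc (K + 1) * totalActive N (K + 1) v = K * totalActive N K v + N ! :=
            succ_mul_totalActive_succ_of_lt (k := k) hv
        _ ≤ (K + 2 * v.val) * N ! + N ! := Nat.add_le_add_right (ih hK'.le hv) _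
        _ = (K + 1 + 2 * v.val) * N ! := by ring
    · obtain rfl : v = k := Fin.ext hv
      calc (K + 1) * totalActive N (K + 1) k
          = ∑ c : Fin (K + 1), totalActive N K (emb k c) + (K + 1) * N ! :=
            succ_mul_totalActive_succ_self k
        _ ≤ 2 * K * N ! + (K + 1) * N ! :=
            Nat.add_le_add_right (sum_totalActive_emb_le k fun w hw => ih hK'.le hw) _
        _ = (K + 1 + 2 * K) * N ! := by ring

lemma sum_card_invActiveSet (y : Fin N) :
    ∑ π : Perm (Fin N), (invActiveSet π y).card = totalActive N N y :=
  (Fintype.sum_bijective Phi Factors.Phi_bijective _ _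
    fun t => (Factors.card_invActiveSet_Phi t y).symm).symm

end totalActive

theorem stmt8_general {N : ℕ} (y : Fin N) :
    (∑ π : Equiv.Perm (Fin N), ((invActiveSet π y).card : ℝ)) / (N.factorial : ℝ)
        ≤ 1 + (2 * ((y.val : ℝ) + 1) - 2) / (N : ℝ)
    ∧ (∑ π : Equiv.Perm (Fin N), ((invActiveSet π y).card : ℝ)) / (N.factorial : ℝ) < 3 := by
  have hN : (0 : ℝ) < N := by exact_mod_cast y.pos
  have hfac : (0 : ℝ) < N ! := by exact_mod_cast N.factorial_pos
  have hy : (y.val : ℝ) < N := by exact_mod_cast y.isLt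
  have hbound : (N : ℝ) * ∑ π : Perm (Fin N), ((invActiveSet π y).card : ℝ)
      ≤ (N + 2 * y.val) * N ! := by
    have := mul_totalActive_le le_rfl y.isLt
    rw [← sum_card_invActiveSet] at this
    exact_mod_cast this
  have hle : (∑ π : Perm (Fin N), ((invActiveSet π y).card : ℝ)) / N !
      ≤ 1 + (2 * ((y.val : ℝ) + 1) - 2) / N := by
    rw [div_le_iff₀ hfac, show 1 + (2 * ((y.val : ℝ) + 1) - 2) / N = (N + 2 * y.val) / N by
      field_simp; ring, div_mul_eq_mul_div, le_div_iff₀ hN]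
    linarith
  refine ⟨hle, hle.trans_lt ?_⟩
  have : (2 * ((y.val : ℝ) + 1) - 2) / N < 2 := by
    rw [div_lt_iff₀ hN]
    linarith
  linarith

/-- For every `y ∈ [N]`, the expected number of inverse-active locations
for a uniformly random permutation satisfies
`(1/N!) ∑_π |A^inv(π,y)| ≤ 1 + (2y − 2)/N < 3`. -/
theorem stmt8 {N : ℕ} (hN : 1 ≤ N) (y : Fin N) :
    (∑ π : Equiv.Perm (Fin N), ((invActiveSet π y).card : ℝ)) / (N.factorial : ℝ)
        ≤ 1 + (2 * ((y.val : ℝ) + 1) - 2) / (N : ℝ)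
    ∧ (∑ π : Equiv.Perm (Fin N), ((invActiveSet π y).card : ℝ)) / (N.factorial : ℝ) < 3 :=
  stmt8_general y
end
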